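/- Let M be a model, w a world, Γ a finite set of formulas, ann an annotation for Γ, and chn a function such that (M, w, chn) annotated-satisfies (Γ, ann). Let φ be a formula with M, w ⊨ φ such that φ ∉ Ev or ann(φ) = ⊥. Then there exists an extension chn' of chn such that (M, w, chn') annotated-satisfies (Γ ∪ {φ}, ann). -/

import Mathlib

/-!
Unfolding `M, w ⊨ φ` for an eventuality `φ` along its diamonds and programs (the star case by
induction on the reflexive-transitive closure) gives a model chain from `(w, φ)` to `ex φ` on which
every eventuality has the same `ex`. Shortcutting repeated entries makes it duplicate-free; cutting
it at the first entry `(w, χ)` where `chn χ` is defined and continuing with `chn χ` makes every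
eventuality met at `w` either carry its `chn`-chain as the remaining suffix, or occur exactly once,
so that the suffix from that occurrence can serve as its new chain. Annotated eventualities lie in
`Γ`, hence already have chains, and the annotation condition is inherited from `chn`.
-/

mutual
inductive Fml : Type where
  | var : ℕ → Fml
  | neg : Fml → Fml
  | and : Fml → Fml → Fml
  | or : Fml → Fml → Fml
  | dia : Prog → Fml → Fml
  | box : Prog → Fml → Fml
  deriving DecidableEq
inductive Prog : Type where
  | atom : ℕ → Prog
  | conv : ℕ → Prog
  | seq : Prog → Prog → Prog
  | choice : Prog → Prog → Prog
  | star : Prog → Prog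
  | test : Fml → Prog
  deriving DecidableEq
end

structure Model (W : Type) where
  R : ℕ → W → W → Prop
  V : ℕ → W → Prop

mutual
def Sat {W : Type} (M : Model W) : W → Fml → Prop
  | w, .var p => M.V p w
  | w, .neg φ => ¬ Sat M w φ
  | w, .and φ ψ => Sat M w φ ∧ Sat M w ψ
  | w, .or φ ψ => Sat M w φ ∨ Sat M w ψ
  | w, .dia γ φ => ∃ v, PRel M γ w v ∧ Sat M v φ
  | w, .box γ φ => ∀ v, PRel M γ w v → Sat M v φ
def PRel {W : Type} (M : Model W) : Prog → W → W → Prop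
  | .atom a, w, v => M.R a w v
  | .conv a, w, v => M.R a v w
  | .seq γ δ, w, v => ∃ u, PRel M γ w u ∧ PRel M δ u v
  | .choice γ δ, w, v => PRel M γ w v ∨ PRel M δ w v
  | .star γ, w, v => Relation.ReflTransGen (fun a b => PRel M γ a b) w v
  | .test φ, w, v => w = v ∧ Sat M w φ
end
mutual
def IsNNF : Fml → Prop
  | .var _ => True
  | .neg (.var _) => True
  | .neg _ => False
  | .and φ ψ => IsNNF φ ∧ IsNNF ψ
  | .or φ ψ => IsNNF φ ∧ IsNNF ψ
  | .dia γ φ => IsNNFP γ ∧ IsNNF φ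
  | .box γ φ => IsNNFP γ ∧ IsNNF φ
def IsNNFP : Prog → Prop
  | .atom _ => True
  | .conv _ => True
  | .seq γ δ => IsNNFP γ ∧ IsNNFP δ
  | .choice γ δ => IsNNFP γ ∧ IsNNFP δ
  | .star γ => IsNNFP γ
  | .test φ => IsNNF φ
end

mutual
/-- `nnf φ` is the negation normal form of `φ`. -/
def nnf : Fml → Fml
  | .var p => .var p
  | .neg φ => nnfNeg φ
  | .and φ ψ => .and (nnf φ) (nnf ψ)
  | .or φ ψ => .or (nnf φ) (nnf ψ)
  | .dia γ φ => .dia γ (nnf φ)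
  | .box γ φ => .box γ (nnf φ)
/-- `nnfNeg φ = nnf (¬ φ)`, written `∼φ`. -/
def nnfNeg : Fml → Fml
  | .var p => .neg (.var p)
  | .neg φ => nnf φ
  | .and φ ψ => .or (nnfNeg φ) (nnfNeg ψ)
  | .or φ ψ => .and (nnfNeg φ) (nnfNeg ψ)
  | .dia γ φ => .box γ (nnfNeg φ)
  | .box γ φ => .dia γ (nnfNeg φ)
end

/-- Literal programs: atomic programs or converses of atomic programs. -/
inductive Lit : Type where
  | atom : ℕ → Lit
  | conv : ℕ → Lit
  deriving DecidableEq

def Lit.toProg : Lit → Prog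
  | .atom a => .atom a
  | .conv a => .conv a

/-- The converse `l⁻` of a literal program. -/
def Lit.inv : Lit → Lit
  | .atom a => .conv a
  | .conv a => .atom a

/-- The reduction relation `⤳` on ⟨·⟩-formulae. -/
inductive Red : Fml → Fml → Prop where
  | seq (γ δ χ) : Red (.dia (.seq γ δ) χ) (.dia γ (.dia δ χ))
  | choiceL (γ δ χ) : Red (.dia (.choice γ δ) χ) (.dia γ χ)
  | choiceR (γ δ χ) : Red (.dia (.choice γ δ) χ) (.dia δ χ)
  | star1 (γ χ) : Red (.dia (.star γ) χ) χ
  | star2 (γ χ) : Red (.dia (.star γ) χ) (.dia γ (.dia (.star γ) χ))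
  | test (ϕ χ) : Red (.dia (.test ϕ) χ) χ

/-- `InPre ψ φ` means `φ ∈ pre(ψ)`, i.e. `φ = ⟨γ₁⟩…⟨γ_k⟩ψ`. -/
inductive InPre (ψ : Fml) : Fml → Prop where
  | base : InPre ψ ψ
  | step (γ φ) : InPre ψ φ → InPre ψ (.dia γ φ)

/-- `φ` is an eventuality: `φ = ⟨γ₁⟩…⟨γ_k⟩⟨γ*⟩ψ`. -/
def IsEv (φ : Fml) : Prop := ∃ γ ψ, InPre (.dia (.star γ) ψ) φ

mutual
/-- Size of formulas. -/
def fsize : Fml → ℕ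
  | .var _ => 1
  | .neg (.var _) => 1
  | .neg φ => 1 + fsize φ
  | .and φ ψ => 1 + fsize φ + fsize ψ
  | .or φ ψ => 1 + fsize φ + fsize ψ
  | .dia γ φ => psize γ + fsize φ
  | .box γ φ => psize γ + fsize φ
/-- Size of programs. -/
def psize : Prog → ℕ
  | .atom _ => 1
  | .conv _ => 1
  | .seq γ δ => 1 + psize γ + psize δ
  | .choice γ δ => 1 + psize γ + psize δ
  | .star γ => 1 + psize γ
  | .test φ => 1 + fsize φ
end
/-- One decomposition step generating the closure `cl(φ)`. -/
inductive ClStep : Fml → Fml → Prop where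
  | diaLit (l : Lit) (ψ) : ClStep (.dia l.toProg ψ) ψ
  | boxLit (l : Lit) (ψ) : ClStep (.box l.toProg ψ) ψ
  | andL (φ ψ) : ClStep (.and φ ψ) φ
  | andR (φ ψ) : ClStep (.and φ ψ) ψ
  | orL (φ ψ) : ClStep (.or φ ψ) φ
  | orR (φ ψ) : ClStep (.or φ ψ) ψ
  | boxChoiceL (γ δ φ) : ClStep (.box (.choice γ δ) φ) (.box γ φ)
  | boxChoiceR (γ δ φ) : ClStep (.box (.choice γ δ) φ) (.box δ φ)
  | boxStar1 (γ φ) : ClStep (.box (.star γ) φ) φ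
  | boxStar2 (γ φ) : ClStep (.box (.star γ) φ) (.box γ (.box (.star γ) φ))
  | diaTest1 (ψ φ) : ClStep (.dia (.test ψ) φ) φ
  | diaTest2 (ψ φ) : ClStep (.dia (.test ψ) φ) ψ
  | diaSeq (γ δ φ) : ClStep (.dia (.seq γ δ) φ) (.dia γ (.dia δ φ))
  | boxSeq (γ δ φ) : ClStep (.box (.seq γ δ) φ) (.box γ (.box δ φ))
  | diaChoiceL (γ δ φ) : ClStep (.dia (.choice γ δ) φ) (.dia γ φ)
  | diaChoiceR (γ δ φ) : ClStep (.dia (.choice γ δ) φ) (.dia δ φ)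
  | diaStar1 (γ φ) : ClStep (.dia (.star γ) φ) φ
  | diaStar2 (γ φ) : ClStep (.dia (.star γ) φ) (.dia γ (.dia (.star γ) φ))
  | boxTest1 (ψ φ) : ClStep (.box (.test ψ) φ) φ
  | boxTest2 (ψ φ) : ClStep (.box (.test ψ) φ) (nnfNeg ψ)

/-- The closure `cl(φ)`: the least set containing `φ` and closed under `ClStep`. -/
def Cl (φ : Fml) : Set Fml := {ψ | Relation.ReflTransGen ClStep φ ψ}

/-- A single step of a (model) chain: a literal-program diamond is instantiated,
otherwise a `⤳`-reduction happens at the same world. -/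
def ChainStep {W : Type} (M : Model W) : (W × Fml) → (W × Fml) → Prop
  | (w, .dia (.atom a) χ), (w', χ') => χ' = χ ∧ M.R a w w'
  | (w, .dia (.conv a) χ), (w', χ') => χ' = χ ∧ M.R a w' w
  | (w, χ), (w', χ') => Red χ χ' ∧ w' = w

/-- `σ` is a model chain for `(M, w, φ, ψ)`. -/
def ModelChain {W : Type} (M : Model W) (w : W) (φ ψ : Fml) (σ : List (W × Fml)) : Prop :=
  ∃ h : σ ≠ [], σ.head h = (w, φ) ∧ (σ.getLast h).2 = ψ ∧
    (∀ p ∈ σ, Sat M p.1 p.2) ∧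
    ∀ i, (h1 : i + 1 < σ.length) →
      ChainStep M (σ.get ⟨i, by omega⟩) (σ.get ⟨i + 1, h1⟩)

open Classical in
/-- `ex φ`: the largest non-eventuality `ψ` with `φ ∈ pre(ψ)`. -/
noncomputable def ex : Fml → Fml
  | .dia γ ψ => if IsEv (.dia γ ψ) then ex ψ else .dia γ ψ
  | φ => φ

mutual
/-- `SubF χ φ`: `χ` is a subformula of the formula `φ`. -/
inductive SubF : Fml → Fml → Prop where
  | refl (φ) : SubF φ φ
  | neg {χ φ} : SubF χ φ → SubF χ (.neg φ)
  | andL {χ φ ψ} : SubF χ φ → SubF χ (.and φ ψ)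
  | andR {χ φ ψ} : SubF χ ψ → SubF χ (.and φ ψ)
  | orL {χ φ ψ} : SubF χ φ → SubF χ (.or φ ψ)
  | orR {χ φ ψ} : SubF χ ψ → SubF χ (.or φ ψ)
  | diaF {χ γ φ} : SubF χ φ → SubF χ (.dia γ φ)
  | diaP {χ γ φ} : SubP χ γ → SubF χ (.dia γ φ)
  | boxF {χ γ φ} : SubF χ φ → SubF χ (.box γ φ)
  | boxP {χ γ φ} : SubP χ γ → SubF χ (.box γ φ)
/-- `SubP χ γ`: `χ` is a subformula of the program `γ`. -/
inductive SubP : Fml → Prog → Prop where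
  | seqL {χ γ δ} : SubP χ γ → SubP χ (.seq γ δ)
  | seqR {χ γ δ} : SubP χ δ → SubP χ (.seq γ δ)
  | choiceL {χ γ δ} : SubP χ γ → SubP χ (.choice γ δ)
  | choiceR {χ γ δ} : SubP χ δ → SubP χ (.choice γ δ)
  | star {χ γ} : SubP χ γ → SubP χ (.star γ)
  | test {χ φ} : SubF χ φ → SubP χ (.test φ)
end
/-- `ann` is an annotation for `Γ`: it maps some eventualities `φ ∈ Γ`
to a formula `ann φ ∈ Γ` with `φ ⤳ ann φ`. -/
def IsAnnotation (Γ : Set Fml) (ann : Fml → Option Fml) : Prop :=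
  ∀ φ φ', ann φ = some φ' → φ ∈ Γ ∧ IsEv φ ∧ φ' ∈ Γ ∧ Red φ φ'

/-- `ann` is full on `Γ`: it is defined on all eventualities of `Γ`. -/
def FullAnn (Γ : Set Fml) (ann : Fml → Option Fml) : Prop :=
  ∀ φ ∈ Γ, IsEv φ → (ann φ).isSome

/-- `ann` is non-cyclic: there is no cycle `φ₀, …, φ_n` with `ann φ_i = φ_{i+1 mod n+1}`. -/
def NonCyclic (ann : Fml → Option Fml) : Prop :=
  ¬ ∃ (n : ℕ) (f : ℕ → Fml), (∀ i < n, ann (f i) = some (f (i + 1))) ∧ ann (f n) = some (f 0)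

/-- One step of iterating an annotation (identity where undefined). -/
def annStep (ann : Fml → Option Fml) (φ : Fml) : Fml := (ann φ).getD φ

/-- The pure-formula version of a chain step:
if `χ = ⟨l⟩χ₀` for a literal program `l` then `χ' = χ₀`, else `χ ⤳ χ'`. -/
def FStep : Fml → Fml → Prop
  | .dia (.atom _) χ, χ' => χ' = χ
  | .dia (.conv _) χ, χ' => χ' = χ
  | χ, χ' => Red χ χ'

mutual
/-- The atomic program `d` occurs in a formula. -/
def OccursF (d : ℕ) : Fml → Prop
  | .var _ => False
  | .neg φ => OccursF d φ
  | .and φ ψ => OccursF d φ ∨ OccursF d ψ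
  | .or φ ψ => OccursF d φ ∨ OccursF d ψ
  | .dia γ φ => OccursP d γ ∨ OccursF d φ
  | .box γ φ => OccursP d γ ∨ OccursF d φ
/-- The atomic program `d` occurs in a program (as `d` or `d⁻`). -/
def OccursP (d : ℕ) : Prog → Prop
  | .atom a => a = d
  | .conv a => a = d
  | .seq γ δ => OccursP d γ ∨ OccursP d δ
  | .choice γ δ => OccursP d γ ∨ OccursP d δ
  | .star γ => OccursP d γ
  | .test φ => OccursF d φ
end

/-- `(M, w, chn)` annotated-satisfies `(Γ, ann)`. -/
def AnnSat {W : Type} (M : Model W) (w : W)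
    (chn : Fml → Option (List (W × Fml))) (Γ : Set Fml) (ann : Fml → Option Fml) : Prop :=
  (∀ ψ ∈ Γ, Sat M w ψ) ∧
  (∀ ψ ∈ Γ, IsEv ψ → (chn ψ).isSome) ∧
  (∀ ψ σ, IsEv ψ → chn ψ = some σ →
    ModelChain M w ψ (ex ψ) σ ∧
    (∀ i, (h : i < σ.length) → ∀ χ, σ.get ⟨i, h⟩ = (w, χ) → IsEv χ → chn χ = some (σ.drop i)) ∧
    (∀ ψ', ann ψ = some ψ' → ∃ h : 1 < σ.length, σ.get ⟨1, h⟩ = (w, ψ')))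

theorem isEv_dia_iff {γ : Prog} {ψ : Fml} : IsEv (.dia γ ψ) ↔ (∃ g, γ = .star g) ∨ IsEv ψ := by
  constructor
  · rintro ⟨g, χ, hpre⟩
    cases hpre with
    | base => exact Or.inl ⟨g, rfl⟩
    | step _ _ hpre => exact Or.inr ⟨g, χ, hpre⟩
  · rintro (⟨g, rfl⟩ | ⟨g, χ, hpre⟩)
    · exact ⟨g, ψ, .base⟩
    · exact ⟨g, χ, .step _ _ hpre⟩

theorem isEv_dia_of_isEv {γ : Prog} {ψ : Fml} (h : IsEv ψ) : IsEv (.dia γ ψ) :=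
  isEv_dia_iff.2 (Or.inr h)

theorem isEv_dia_star (g : Prog) (ψ : Fml) : IsEv (.dia (.star g) ψ) :=
  isEv_dia_iff.2 (Or.inl ⟨g, rfl⟩)

theorem ex_dia_of_isEv {γ : Prog} {ψ : Fml} (h : IsEv (.dia γ ψ)) : ex (.dia γ ψ) = ex ψ := by
  rw [ex, if_pos h]

theorem ex_of_not_isEv {φ : Fml} (h : ¬ IsEv φ) : ex φ = φ := by
  cases φ with
  | dia γ ψ => rw [ex, if_neg h]
  | _ => simp [ex]

theorem List.IsChain.exists_nodup_subset {α : Type*} {R : α → α → Prop} :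
    ∀ {l : List α}, l.IsChain R →
      ∃ l', l'.IsChain R ∧ l'.Nodup ∧ l'.head? = l.head? ∧ l'.getLast? = l.getLast? ∧ l' ⊆ l
  | [], _ => ⟨[], .nil, List.nodup_nil, rfl, rfl, List.Subset.refl _⟩
  | a :: l, h => by
    by_cases ha : a ∈ l
    · obtain ⟨s, t, rfl⟩ := List.append_of_mem ha
      have hsuffix : (a :: t) <:+ a :: (s ++ a :: t) := List.suffix_append (a :: s) (a :: t)
      have hlen : t.length < s.length + t.length + 1 + 1 := by omega
      obtain ⟨l', hc, hnd, hh, hl, hsub⟩ := (h.suffix hsuffix).exists_nodup_subset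
      refine ⟨l', hc, hnd, hh, ?_, List.Subset.trans hsub hsuffix.subset⟩
      rw [hl, ← List.cons_append, List.getLast?_append_cons]
    · have hl : l.IsChain R := h.tail
      obtain ⟨l', hc, hnd, hh, hl, hsub⟩ := hl.exists_nodup_subset
      refine ⟨a :: l', List.isChain_cons.2 ⟨hh ▸ h.rel_head?, hc⟩,
        List.nodup_cons.2 ⟨fun h' => ha (hsub h'), hnd⟩, rfl, ?_, List.cons_subset_cons a hsub⟩
      rw [List.getLast?_cons, List.getLast?_cons, hl]
termination_by l => l.length

section Chains

variable {W : Type} {M : Model W}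

def IsSatChain (M : Model W) (σ : List (W × Fml)) : Prop :=
  σ.IsChain (ChainStep M) ∧ ∀ p ∈ σ, Sat M p.1 p.2

theorem modelChain_iff {w : W} {φ ψ : Fml} {σ : List (W × Fml)} :
    ModelChain M w φ ψ σ ↔
      IsSatChain M σ ∧ σ.head? = some (w, φ) ∧ σ.getLast?.map Prod.snd = some ψ := by
  constructor
  · rintro ⟨hne, hhead, hlast, hsat, hstep⟩
    refine ⟨⟨List.isChain_iff_getElem.2 hstep, hsat⟩, ?_, ?_⟩
    · rw [List.head?_eq_some_head hne, hhead]
    · rw [List.getLast?_eq_some_getLast hne, Option.map_some, hlast]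
  · rintro ⟨⟨hchain, hsat⟩, hhead, hlast⟩
    have hne : σ ≠ [] := by rintro rfl; simp at hhead
    refine ⟨hne, ?_, ?_, hsat, List.isChain_iff_getElem.1 hchain⟩
    · simpa [List.head?_eq_some_head hne] using hhead
    · simpa [List.getLast?_eq_some_getLast hne] using hlast

theorem IsSatChain.cons {p q : W × Fml} {σ : List (W × Fml)} (hp : Sat M p.1 p.2)
    (hpq : ChainStep M p q) (h : IsSatChain M (q :: σ)) : IsSatChain M (p :: q :: σ) :=
  ⟨h.1.cons_cons hpq, List.forall_mem_cons.2 ⟨hp, h.2⟩⟩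

theorem IsSatChain.singleton {p : W × Fml} (hp : Sat M p.1 p.2) : IsSatChain M [p] :=
  ⟨.singleton p, by simpa using hp⟩

theorem IsSatChain.head_sat {p : W × Fml} {σ : List (W × Fml)} (h : IsSatChain M (p :: σ)) :
    Sat M p.1 p.2 :=
  h.2 p List.mem_cons_self

theorem exists_isSatChain_of_pRel {u v : W} {ψ : Fml} {σ : List (W × Fml)} :
    ∀ {γ : Prog}, IsEv (.dia γ ψ) → PRel M γ u v → IsSatChain M ((v, ψ) :: σ) →
      ∃ ρ, IsSatChain M ((u, .dia γ ψ) :: ρ ++ (v, ψ) :: σ) ∧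
        ∀ p ∈ (u, .dia γ ψ) :: ρ, IsEv p.2 → ex p.2 = ex (.dia γ ψ)
  | .atom a, _, huv, hσ => ⟨[], hσ.cons ⟨v, huv, hσ.head_sat⟩ ⟨rfl, huv⟩, by simp⟩
  | .conv a, _, huv, hσ => ⟨[], hσ.cons ⟨v, huv, hσ.head_sat⟩ ⟨rfl, huv⟩, by simp⟩
  | .test θ, _, ⟨huv, hθ⟩, hσ => by
    subst huv
    exact ⟨[], hσ.cons ⟨u, ⟨rfl, hθ⟩, hσ.head_sat⟩ ⟨.test θ ψ, rfl⟩, by simp⟩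
  | .seq γ δ, hev, ⟨m, hum, hmv⟩, hσ => by
    have hψ : IsEv ψ := (isEv_dia_iff.1 hev).resolve_left (by rintro ⟨g, ⟨⟩⟩)
    have hδ : IsEv (.dia δ ψ) := isEv_dia_of_isEv hψ
    obtain ⟨ρ₁, hc₁, hex₁⟩ := exists_isSatChain_of_pRel hδ hmv hσ
    obtain ⟨ρ₂, hc₂, hex₂⟩ := exists_isSatChain_of_pRel (isEv_dia_of_isEv hδ) hum hc₁
    have hc := IsSatChain.cons (p := (u, .dia (.seq γ δ) ψ))
      ⟨v, ⟨m, hum, hmv⟩, hσ.head_sat⟩ ⟨.seq γ δ ψ, rfl⟩ hc₂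
    refine ⟨(u, .dia γ (.dia δ ψ)) :: ρ₂ ++ (m, .dia δ ψ) :: ρ₁, by simpa using hc, ?_⟩
    rw [ex_dia_of_isEv hev]
    rw [ex_dia_of_isEv hδ] at hex₁
    rw [ex_dia_of_isEv (isEv_dia_of_isEv hδ), ex_dia_of_isEv hδ] at hex₂
    simp only [List.cons_append, List.forall_mem_cons, List.forall_mem_append] at hex₁ hex₂ ⊢
    exact ⟨fun h => ex_dia_of_isEv h, hex₂.1, hex₂.2, hex₁⟩
  | .choice γ δ, hev, huv, hσ => by
    have hψ : IsEv ψ := (isEv_dia_iff.1 hev).resolve_left (by rintro ⟨g, ⟨⟩⟩)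
    have hsat : Sat M u (.dia (.choice γ δ) ψ) := ⟨v, huv, hσ.head_sat⟩
    rw [ex_dia_of_isEv hev]
    rcases huv with huv | huv
    · obtain ⟨ρ, hc, hex⟩ := exists_isSatChain_of_pRel (isEv_dia_of_isEv hψ) huv hσ
      rw [ex_dia_of_isEv (isEv_dia_of_isEv hψ)] at hex
      exact ⟨(u, .dia γ ψ) :: ρ, hc.cons hsat ⟨.choiceL γ δ ψ, rfl⟩,
        List.forall_mem_cons.2 ⟨fun h => ex_dia_of_isEv h, hex⟩⟩
    · obtain ⟨ρ, hc, hex⟩ := exists_isSatChain_of_pRel (isEv_dia_of_isEv hψ) huv hσ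
      rw [ex_dia_of_isEv (isEv_dia_of_isEv hψ)] at hex
      exact ⟨(u, .dia δ ψ) :: ρ, hc.cons hsat ⟨.choiceR γ δ ψ, rfl⟩,
        List.forall_mem_cons.2 ⟨fun h => ex_dia_of_isEv h, hex⟩⟩
  | .star g, hev, huv, hσ => by
    rw [ex_dia_of_isEv hev]
    have hgev : IsEv (.dia g (.dia (.star g) ψ)) := isEv_dia_of_isEv (isEv_dia_star g ψ)
    change Relation.ReflTransGen (PRel M g) u v at huv
    induction huv using Relation.ReflTransGen.head_induction_on with
    | refl =>
      exact ⟨[], hσ.cons ⟨v, .refl, hσ.head_sat⟩ ⟨.star1 g ψ, rfl⟩,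
        List.forall_mem_singleton.2 fun h => ex_dia_of_isEv h⟩
    | @head a c hac hcv ih =>
      obtain ⟨ρ₁, hc₁, hex₁⟩ := ih
      obtain ⟨ρ₂, hc₂, hex₂⟩ := exists_isSatChain_of_pRel hgev hac hc₁
      rw [ex_dia_of_isEv hgev, ex_dia_of_isEv (isEv_dia_star g ψ)] at hex₂
      have hc := IsSatChain.cons (p := (a, .dia (.star g) ψ))
        ⟨v, .head hac hcv, hσ.head_sat⟩ ⟨.star2 g ψ, rfl⟩ hc₂
      refine ⟨(a, .dia g (.dia (.star g) ψ)) :: ρ₂ ++ (c, .dia (.star g) ψ) :: ρ₁,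
        by simpa using hc, ?_⟩
      simp only [List.cons_append, List.forall_mem_cons, List.forall_mem_append] at hex₁ hex₂ ⊢
      exact ⟨hex₁.1, hex₂.1, hex₂.2, hex₁⟩

theorem exists_modelChain_ex : ∀ {φ : Fml} {u : W}, IsEv φ → Sat M u φ →
    ∃ σ, ModelChain M u φ (ex φ) σ ∧ ∀ p ∈ σ, IsEv p.2 → ex p.2 = ex φ
  | .dia γ ψ, u, hev, ⟨v, huv, hψ⟩ => by
    obtain ⟨σ, hσ, hlast, hexσ⟩ : ∃ σ, IsSatChain M ((v, ψ) :: σ) ∧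
        ((v, ψ) :: σ).getLast?.map Prod.snd = some (ex ψ) ∧
        ∀ p ∈ (v, ψ) :: σ, IsEv p.2 → ex p.2 = ex ψ := by
      by_cases hψev : IsEv ψ
      · obtain ⟨σ, hmc, hex⟩ := exists_modelChain_ex hψev hψ
        obtain ⟨hc, hhead, hlast⟩ := modelChain_iff.1 hmc
        obtain ⟨σ, rfl⟩ := List.head?_eq_some_iff.1 hhead
        exact ⟨σ, hc, hlast, hex⟩
      · exact ⟨[], .singleton hψ, by simp [ex_of_not_isEv hψev], by simp [hψev]⟩
    obtain ⟨ρ, hc, hexρ⟩ := exists_isSatChain_of_pRel hev huv hσ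
    rw [ex_dia_of_isEv hev] at hexρ ⊢
    refine ⟨_, modelChain_iff.2 ⟨hc, rfl, ?_⟩, ?_⟩
    · rwa [List.getLast?_append_cons]
    simp only [List.cons_append, List.forall_mem_cons, List.forall_mem_append] at hexρ hexσ ⊢
    exact ⟨hexρ.1, hexρ.2, hexσ⟩
  | .var _, _, ⟨_, _, h⟩, _ | .neg _, _, ⟨_, _, h⟩, _ | .and _ _, _, ⟨_, _, h⟩, _
  | .or _ _, _, ⟨_, _, h⟩, _ | .box _ _, _, ⟨_, _, h⟩, _ => nomatch h

theorem ModelChain.exists_nodup_subset {w : W} {φ ψ : Fml} {σ : List (W × Fml)}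
    (h : ModelChain M w φ ψ σ) : ∃ σ', ModelChain M w φ ψ σ' ∧ σ'.Nodup ∧ σ' ⊆ σ := by
  obtain ⟨⟨hc, hsat⟩, hhead, hlast⟩ := modelChain_iff.1 h
  obtain ⟨σ', hc', hnd, hhead', hlast', hsub⟩ := hc.exists_nodup_subset
  exact ⟨σ', modelChain_iff.2 ⟨⟨hc', fun p hp => hsat p (hsub hp)⟩, hhead' ▸ hhead,
    hlast' ▸ hlast⟩, hnd, hsub⟩

end Chains

section ChainSource

variable {W : Type} {M : Model W} {w : W} {chn : Fml → Option (List (W × Fml))}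

/-- Uniqueness of the occurrence is needed because `AnnSat` asks for the suffix at *every*
occurrence of `(w, χ)`. -/
def IsChainSource (M : Model W) (w : W) (chn : Fml → Option (List (W × Fml)))
    (L : List (W × Fml)) : Prop :=
  ∀ i (hi : i < L.length) χ, L[i] = (w, χ) → IsEv χ →
    chn χ = some (L.drop i) ∨
      (chn χ = none ∧ ModelChain M w χ (ex χ) (L.drop i) ∧
        ∀ j (hj : j < L.length), L[j] = (w, χ) → j = i)

theorem isChainSource_nil : IsChainSource M w chn [] := fun _ hi => absurd hi (by simp)

theorem AnnSat.isChainSource {Γ : Set Fml} {ann : Fml → Option Fml}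
    (h : AnnSat M w chn Γ ann) {χ : Fml} {τ : List (W × Fml)} (hχ : IsEv χ)
    (hτ : chn χ = some τ) : IsChainSource M w chn τ :=
  fun i hi _ hget hev => Or.inl ((h.2.2 χ τ hχ hτ).2.1 i hi _ (by simpa using hget) hev)

theorem IsChainSource.cons {p : W × Fml} {l : List (W × Fml)} {t : Fml}
    (hl : IsChainSource M w chn l) (hmc : ModelChain M p.1 p.2 t (p :: l))
    (hp : p.1 = w → IsEv p.2 → chn p.2 = none ∧ ex p.2 = t ∧ p ∉ l) :
    IsChainSource M w chn (p :: l) := by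
  intro i hi χ hget hev
  cases i with
  | zero =>
    obtain rfl : p = (w, χ) := hget
    obtain ⟨hnone, rfl, hnotin⟩ := hp rfl hev
    refine Or.inr ⟨hnone, hmc, fun j hj hgetj => ?_⟩
    cases j with
    | zero => rfl
    | succ j => exact absurd (hgetj ▸ List.getElem_mem _) hnotin
  | succ i =>
    rcases hl i (by simpa using hi) χ hget hev with hsome | ⟨hnone, hmcχ, huniq⟩
    · exact Or.inl hsome
    refine Or.inr ⟨hnone, hmcχ, fun j hj hgetj => ?_⟩
    cases j with
    | zero =>
      obtain rfl : p = (w, χ) := hgetj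
      exact absurd (hget ▸ List.getElem_mem _) (hp rfl hev).2.2
    | succ j => exact congrArg (· + 1) (huniq j (by simpa using hj) hgetj)

theorem AnnSat.exists_isChainSource {Γ : Set Fml} {ann : Fml → Option Fml}
    (h : AnnSat M w chn Γ ann) {t : Fml} :
    ∀ {p : W × Fml} {l : List (W × Fml)}, (p :: l).Nodup → IsSatChain M (p :: l) →
      (p :: l).getLast?.map Prod.snd = some t →
      (∀ q ∈ p :: l, q.1 = w → IsEv q.2 → ex q.2 = t) →
      ∃ L, IsChainSource M w chn L ∧ ModelChain M p.1 p.2 t L ∧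
        ∀ q ∈ L, q.1 = w → IsEv q.2 → chn q.2 = none → q ∈ p :: l
  | p, l, hnd, hc, hlast, hex => by
    by_cases hdef : p.1 = w ∧ IsEv p.2 ∧ (chn p.2).isSome
    · obtain ⟨hpw, hpev, hsome⟩ := hdef
      obtain ⟨τ, hτ⟩ := Option.isSome_iff_exists.1 hsome
      obtain ⟨hmc, hcoh, -⟩ := h.2.2 _ τ hpev hτ
      refine ⟨τ, h.isChainSource hpev hτ, ?_, fun q hq hqw hqev hnone => ?_⟩
      · rwa [hpw, ← hex p List.mem_cons_self hpw hpev]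
      · obtain ⟨i, hi, rfl⟩ := List.getElem_of_mem hq
        simp [hcoh i hi _ (by simp [← hqw]) hqev] at hnone
    have hfresh : p.1 = w → IsEv p.2 → chn p.2 = none := fun hpw hpev =>
      Option.not_isSome_iff_eq_none.1 fun hs => hdef ⟨hpw, hpev, hs⟩
    cases l with
    | nil =>
      have hmc : ModelChain M p.1 p.2 t [p] := modelChain_iff.2 ⟨hc, rfl, hlast⟩
      refine ⟨[p], isChainSource_nil.cons hmc fun hpw hpev => ?_, hmc, fun q hq _ _ _ => hq⟩
      exact ⟨hfresh hpw hpev, hex p List.mem_cons_self hpw hpev, List.not_mem_nil⟩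
    | cons q l =>
      obtain ⟨L, hsrc, hmc, hsub⟩ := h.exists_isChainSource (List.nodup_cons.1 hnd).2
        ⟨hc.1.tail, fun r hr => hc.2 r (List.mem_cons_of_mem _ hr)⟩ (by simpa using hlast)
        (fun r hr => hex r (List.mem_cons_of_mem _ hr))
      obtain ⟨hcL, hhead, hlastL⟩ := modelChain_iff.1 hmc
      obtain ⟨m, rfl⟩ := List.head?_eq_some_iff.1 hhead
      have hmc' : ModelChain M p.1 p.2 t (p :: q :: m) :=
        modelChain_iff.2 ⟨hcL.cons hc.head_sat (List.isChain_cons_cons.1 hc.1).1, rfl,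
          by simpa using hlastL⟩
      refine ⟨p :: q :: m, hsrc.cons hmc' fun hpw hpev => ⟨hfresh hpw hpev,
        hex p List.mem_cons_self hpw hpev, fun hp => ?_⟩, hmc', fun r hr hrw hrev hnone => ?_⟩
      · exact (List.nodup_cons.1 hnd).1 (hsub p hp hpw hpev (hfresh hpw hpev))
      · rcases List.mem_cons.1 hr with rfl | hr
        · exact List.mem_cons_self
        · exact List.mem_cons_of_mem _ (hsub r hr hrw hrev hnone)

theorem AnnSat.exists_isChainSource_mem {Γ : Set Fml} {ann : Fml → Option Fml}
    (h : AnnSat M w chn Γ ann) {φ : Fml} (hev : IsEv φ) (hφ : Sat M w φ) :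
    ∃ L, IsChainSource M w chn L ∧ (w, φ) ∈ L := by
  obtain ⟨σ, hmc, hex⟩ := exists_modelChain_ex hev hφ
  obtain ⟨σ, hmc, hnd, hsub⟩ := hmc.exists_nodup_subset
  obtain ⟨hc, hhead, hlast⟩ := modelChain_iff.1 hmc
  obtain ⟨l, rfl⟩ := List.head?_eq_some_iff.1 hhead
  obtain ⟨L, hsrc, hmcL, -⟩ :=
    h.exists_isChainSource hnd hc hlast fun q hq _ hqev => hex q (hsub hq) hqev
  exact ⟨L, hsrc, List.mem_of_mem_head? (modelChain_iff.1 hmcL).2.1⟩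

open Classical in
noncomputable def extendChn (chn : Fml → Option (List (W × Fml))) (w : W)
    (L : List (W × Fml)) (ψ : Fml) : Option (List (W × Fml)) :=
  (chn ψ).or (if (w, ψ) ∈ L then some (L.drop (L.idxOf (w, ψ))) else none)

variable {L : List (W × Fml)} {ψ : Fml} {σ : List (W × Fml)}

theorem extendChn_of_some (hψ : chn ψ = some σ) : extendChn chn w L ψ = some σ := by
  simp [extendChn, hψ]

theorem extendChn_of_none {i : ℕ} (hψ : chn ψ = none) (hi : i < L.length)
    (hget : L[i] = (w, ψ)) (huniq : ∀ j (hj : j < L.length), L[j] = (w, ψ) → j = i) :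
    extendChn chn w L ψ = some (L.drop i) := by
  classical
  have hmem : (w, ψ) ∈ L := hget ▸ List.getElem_mem hi
  have hidx := List.idxOf_lt_length_iff.2 hmem
  simp [extendChn, hψ, hmem, huniq _ hidx (List.getElem_idxOf hidx)]

theorem exists_of_extendChn_of_none (hψ : chn ψ = none) (h : extendChn chn w L ψ = some σ) :
    ∃ i, ∃ hi : i < L.length, L[i] = (w, ψ) ∧ σ = L.drop i := by
  classical
  simp only [extendChn, hψ, Option.none_or] at h
  split_ifs at h with hmem
  have hidx := List.idxOf_lt_length_iff.2 hmem
  exact ⟨_, hidx, List.getElem_idxOf hidx, (Option.some.inj h).symm⟩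

theorem annSat_extendChn {Γ Δ : Set Fml} {ann : Fml → Option Fml} (h : AnnSat M w chn Γ ann)
    (hann : IsAnnotation Γ ann) (hL : IsChainSource M w chn L) (hsat : ∀ ψ ∈ Δ, Sat M w ψ)
    (hcov : ∀ ψ ∈ Δ, IsEv ψ → (chn ψ).isSome ∨ (w, ψ) ∈ L) :
    AnnSat M w (extendChn chn w L) Δ ann := by
  refine ⟨hsat, fun ψ hψ hev => ?_, fun ψ σ hev hσ => ?_⟩
  · rcases hcov ψ hψ hev with hs | hmem
    · obtain ⟨τ, hτ⟩ := Option.isSome_iff_exists.1 hs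
      simp [extendChn_of_some hτ]
    · simp [extendChn, hmem]
  cases hψ : chn ψ with
  | some τ =>
    obtain rfl : τ = σ := Option.some.inj ((extendChn_of_some hψ).symm.trans hσ)
    obtain ⟨hmc, hcoh, hann'⟩ := h.2.2 ψ τ hev hψ
    exact ⟨hmc, fun i hi χ hget hevχ => extendChn_of_some (hcoh i hi χ hget hevχ), hann'⟩
  | none =>
    obtain ⟨i, hi, hget, rfl⟩ := exists_of_extendChn_of_none hψ hσ
    obtain ⟨-, hmc, -⟩ := (hL i hi ψ hget hev).resolve_left (by simp [hψ])
    refine ⟨hmc, fun j hj χ hgetj hevχ => ?_, fun ψ' hψ' => ?_⟩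
    · have hij : i + j < L.length := by simp at hj; omega
      have hgetij : L[i + j] = (w, χ) := by simpa using hgetj
      rw [List.drop_drop]
      rcases hL (i + j) hij χ hgetij hevχ with hs | ⟨hn, -, hu⟩
      · exact extendChn_of_some hs
      · exact extendChn_of_none hn hij hgetij hu
    · have := h.2.1 ψ (hann ψ ψ' hψ').1 hev
      simp [hψ] at this

end ChainSource

/-- Prop. annsat (1): annotated satisfaction can be extended by a
satisfied formula which is not an eventuality or is unannotated. -/
theorem annsat_extend {W : Type} (M : Model W) (w : W) (Γ : Set Fml) (hfin : Γ.Finite)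
    (ann : Fml → Option Fml) (hann : IsAnnotation Γ ann)
    (chn : Fml → Option (List (W × Fml))) (h : AnnSat M w chn Γ ann)
    (φ : Fml) (hφ : Sat M w φ) (hside : ¬ IsEv φ ∨ ann φ = none) :
    ∃ chn', (∀ ψ σ, chn ψ = some σ → chn' ψ = some σ) ∧
      AnnSat M w chn' (Γ ∪ {φ}) ann := by
  obtain ⟨L, hL, hφL⟩ : ∃ L, IsChainSource M w chn L ∧ (IsEv φ → (w, φ) ∈ L) := by
    by_cases hev : IsEv φ
    · obtain ⟨L, hL, hmem⟩ := h.exists_isChainSource_mem hev hφ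
      exact ⟨L, hL, fun _ => hmem⟩
    · exact ⟨[], isChainSource_nil, fun h => absurd h hev⟩
  refine ⟨extendChn chn w L, fun _ _ => extendChn_of_some, annSat_extendChn h hann hL ?_ ?_⟩
  · rintro ψ (hψ | rfl)
    exacts [h.1 ψ hψ, hφ]
  · rintro ψ (hψ | rfl) hev
    exacts [Or.inl (h.2.1 ψ hψ hev), Or.inr (hφL hev)]
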